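/- Let K be a field, and consider the genus one models C_4 ⊂ P^3 defined by the two quadrics ℓ_1α_1 + ℓ_2α_2 + ℓ_3α_3 = 0 and ℓ_1β_1 + ℓ_2β_2 + ℓ_3β_3 = 0 (with ℓ_i, α_i, β_i linear forms in x_1,...,x_4), and C_5 ⊂ P^4 defined by the 4×4 Pfaffians of the 5×5 alternating matrix Φ with Φ_{12} = x_5, Φ_{13} = α_1, Φ_{14} = α_2, Φ_{15} = α_3, Φ_{23} = β_1, Φ_{24} = β_2, Φ_{25} = β_3, Φ_{34} = ℓ_3, Φ_{35} = -ℓ_2, Φ_{45} = ℓ_1. Then the map ψ(x_1:x_2:x_3:x_4) = (x_1ℓ_i : x_2ℓ_i : x_3ℓ_i : x_4ℓ_i : α_jβ_k - α_kβ_j) (for any cyclic permutation (i,j,k) of (1,2,3)) sends points of C_4 where ℓ_i ≠ 0 to points of C_5, and the projection (x_1:...:x_5) ↦ (x_1:x_2:x_3:x_4) sends points of C_5 back to C_4, with the two maps mutually inverse on the relevant open sets. -/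

import Mathlib

open MvPolynomial

/-- The Pfaffian of a 4×4 alternating matrix. -/
def pf4 {R : Type*} [CommRing R] (M : Matrix (Fin 4) (Fin 4) R) : R :=
  M 0 1 * M 2 3 - M 0 2 * M 1 3 + M 0 3 * M 1 2

/-- The vector of signed 4×4 Pfaffians of a 5×5 alternating matrix. -/
def signedPf {R : Type*} [CommRing R] (M : Matrix (Fin 5) (Fin 5) R) (i : Fin 5) : R :=
  (-1 : R) ^ (i : ℕ) * pf4 (M.submatrix i.succAbove i.succAbove)

section

variable {K : Type*} [Field K] (ℓ α β : Fin 3 → MvPolynomial (Fin 4) K)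

/-- A point of `P³` lies on the quadric intersection
`∑ ℓᵢαᵢ = ∑ ℓᵢβᵢ = 0`. -/
def OnC4 (x : Fin 4 → K) : Prop :=
  (∑ i, eval x (ℓ i) * eval x (α i)) = 0 ∧
  (∑ i, eval x (ℓ i) * eval x (β i)) = 0

/-- The 5×5 alternating matrix `Φ` (with `Φ₁₂ = x₅`, `Φ₁,₂₊ᵢ = αᵢ`,
`Φ₂,₂₊ᵢ = βᵢ`, `Φ₃₄ = ℓ₃`, `Φ₃₅ = -ℓ₂`, `Φ₄₅ = ℓ₁`), evaluated at a point
`y ∈ P⁴`. -/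
noncomputable def modelMatrix (y : Fin 5 → K) : Matrix (Fin 5) (Fin 5) K :=
  let w : Fin 4 → K := fun t => y t.castSucc
  !![0, y 4, eval w (α 0), eval w (α 1), eval w (α 2);
     -(y 4), 0, eval w (β 0), eval w (β 1), eval w (β 2);
     -(eval w (α 0)), -(eval w (β 0)), 0, eval w (ℓ 2), -(eval w (ℓ 1));
     -(eval w (α 1)), -(eval w (β 1)), -(eval w (ℓ 2)), 0, eval w (ℓ 0);
     -(eval w (α 2)), -(eval w (β 2)), eval w (ℓ 1), -(eval w (ℓ 0)), 0]

/-- A point of `P⁴` lies on the Pfaffian locus of the model. -/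
def OnC5 (y : Fin 5 → K) : Prop :=
  ∀ n, signedPf (modelMatrix ℓ α β y) n = 0

/-- The map `ψ : C₄ → C₅` attached to the cyclic permutation `(i,j,k)`. -/
noncomputable def psiMap (i j k : Fin 3) (x : Fin 4 → K) : Fin 5 → K :=
  ![x 0 * eval x (ℓ i), x 1 * eval x (ℓ i), x 2 * eval x (ℓ i),
    x 3 * eval x (ℓ i),
    eval x (α j) * eval x (β k) - eval x (α k) * eval x (β j)]

end

/-!
Write `w` for the first four coordinates of `y ∈ P⁴` and `z = y₅`, and read `ℓ, α, β` at `w` as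
vectors of `K³`. The signed Pfaffians of `Φ` are `ℓ ⬝ β`, `-ℓ ⬝ α` and the coordinates of
`z ℓ - α ⨯ β`, so `C₅` is the locus where `w ∈ C₄` and `z ℓ = α ⨯ β`. On `C₄` the vector `ℓ` is
orthogonal to `α` and `β`, hence `ℓ ⨯ (α ⨯ β) = (ℓ ⬝ β) α - (ℓ ⬝ α) β = 0`, i.e. `ℓ` is parallel to
`α ⨯ β`. As `ψ(x) = (ℓᵢ x, (α ⨯ β)ᵢ)` and all forms are linear, this parallelism is exactly the
condition `z ℓ = α ⨯ β` at `ψ(x)`. Conversely, on `C₅` we have `(α ⨯ β)ᵢ = z ℓᵢ`, so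
`ψ(w) = ℓᵢ(w) • y`.
-/

open Matrix

theorem MvPolynomial.IsHomogeneous.eval_smul {R σ : Type*} [CommSemiring R]
    {p : MvPolynomial σ R} {n : ℕ} (hp : p.IsHomogeneous n) (c : R) (x : σ → R) :
    eval (c • x) p = c ^ n * eval x p := by
  rw [eval_eq, eval_eq, Finset.mul_sum]
  refine Finset.sum_congr rfl fun d hd => ?_
  have hdeg : ∑ t ∈ d.support, d t = n := by
    simpa [Finsupp.weight_apply, Finsupp.sum] using hp (mem_support_iff.mp hd)
  simp only [Pi.smul_apply, smul_eq_mul, mul_pow, Finset.prod_mul_distrib,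
    Finset.prod_pow_eq_pow_sum, hdeg]
  ring

theorem MvPolynomial.eval_comp_smul_of_isHomogeneous {R σ ι : Type*} [CommSemiring R]
    {p : ι → MvPolynomial σ R} {n : ℕ} (hp : ∀ s, (p s).IsHomogeneous n) (c : R)
    (x : σ → R) : eval (c • x) ∘ p = c ^ n • (eval x ∘ p) := by
  ext s
  exact (hp s).eval_smul c x

theorem cross_apply_eq_cyclic {R : Type*} [CommRing R] (u v : Fin 3 → R) (i : Fin 3) :
    (u ⨯₃ v) i = u (i + 1) * v (i + 1 + 1) - u (i + 1 + 1) * v (i + 1) := by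
  fin_cases i <;> simp [cross_apply]

theorem mul_apply_comm_of_cross_eq_zero {R : Type*} [CommRing R] {u v : Fin 3 → R}
    (h : u ⨯₃ v = 0) (a b : Fin 3) : u a * v b = u b * v a := by
  have h0 := congrFun h 0
  have h1 := congrFun h 1
  have h2 := congrFun h 2
  simp only [cross_apply, cons_val_zero, cons_val_one, cons_val, Pi.zero_apply] at h0 h1 h2
  fin_cases a <;> fin_cases b <;> dsimp only [Fin.zero_eta, Fin.mk_one, Fin.reduceFinMk] <;>
    [linear_combination h2; linear_combination -h1; linear_combination -h2;
     linear_combination h0; linear_combination h1; linear_combination -h0]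

theorem mul_cross_apply_comm_of_dotProduct_eq_zero {R : Type*} [CommRing R] {u v w : Fin 3 → R}
    (hv : u ⬝ᵥ v = 0) (hw : u ⬝ᵥ w = 0) (a b : Fin 3) :
    u a * (v ⨯₃ w) b = u b * (v ⨯₃ w) a := by
  refine mul_apply_comm_of_cross_eq_zero ?_ a b
  rw [cross_cross_eq_smul_sub_smul', hw, dotProduct_comm, hv, zero_smul, zero_smul, sub_zero]

section

variable {K : Type*} [Field K] (ℓ α β : Fin 3 → MvPolynomial (Fin 4) K)

theorem onC4_iff (x : Fin 4 → K) :
    OnC4 ℓ α β x ↔ (eval x ∘ ℓ) ⬝ᵥ (eval x ∘ α) = 0 ∧ (eval x ∘ ℓ) ⬝ᵥ (eval x ∘ β) = 0 :=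
  Iff.rfl

theorem signedPf_modelMatrix (y : Fin 5 → K) :
    signedPf (modelMatrix ℓ α β y) =
      let w := Fin.init y
      ![(eval w ∘ ℓ) ⬝ᵥ (eval w ∘ β), -((eval w ∘ ℓ) ⬝ᵥ (eval w ∘ α)),
        (y (Fin.last 4) • (eval w ∘ ℓ) - (eval w ∘ α) ⨯₃ (eval w ∘ β)) 0,
        (y (Fin.last 4) • (eval w ∘ ℓ) - (eval w ∘ α) ⨯₃ (eval w ∘ β)) 1,
        (y (Fin.last 4) • (eval w ∘ ℓ) - (eval w ∘ α) ⨯₃ (eval w ∘ β)) 2] := by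
  ext n
  fin_cases n <;> simp [signedPf, pf4, modelMatrix, Fin.succAbove, cross_apply, dotProduct,
    Fin.sum_univ_three, Fin.init_def] <;> ring

theorem onC5_iff (y : Fin 5 → K) :
    OnC5 ℓ α β y ↔ OnC4 ℓ α β (Fin.init y) ∧
      y (Fin.last 4) • (eval (Fin.init y) ∘ ℓ) =
        (eval (Fin.init y) ∘ α) ⨯₃ (eval (Fin.init y) ∘ β) := by
  rw [← sub_eq_zero, onC4_iff]
  simp only [OnC5, signedPf_modelMatrix, Pi.sub_apply, Pi.smul_apply, Function.comp_apply, smul_eq_mul,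
    Fin.forall_fin_succ, cons_val_zero, cons_val_succ, neg_eq_zero, cons_val_fin_one, forall_const,
    funext_iff, Pi.zero_apply, Fin.succ_zero_eq_one, Fin.succ_one_eq_two, IsEmpty.forall_iff,
    and_true]
  tauto

variable {ℓ α β}

theorem OnC4.smul (hl : ∀ i, (ℓ i).IsHomogeneous 1) (ha : ∀ i, (α i).IsHomogeneous 1)
    (hb : ∀ i, (β i).IsHomogeneous 1) {x : Fin 4 → K} (hx : OnC4 ℓ α β x) (c : K) :
    OnC4 ℓ α β (c • x) := by
  rw [onC4_iff] at hx ⊢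
  simp [eval_comp_smul_of_isHomogeneous hl, eval_comp_smul_of_isHomogeneous ha,
    eval_comp_smul_of_isHomogeneous hb, hx.1, hx.2]

theorem OnC5.onC4_init {y : Fin 5 → K} (hy : OnC5 ℓ α β y) : OnC4 ℓ α β (Fin.init y) :=
  ((onC5_iff ℓ α β y).mp hy).1

theorem psiMap_eq_snoc (i : Fin 3) (x : Fin 4 → K) :
    psiMap ℓ α β i (i + 1) (i + 1 + 1) x =
      Fin.snoc (eval x (ℓ i) • x) (((eval x ∘ α) ⨯₃ (eval x ∘ β)) i) := by
  ext t
  refine Fin.lastCases ?_ (fun t => ?_) t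
  · rw [Fin.snoc_last, cross_apply_eq_cyclic]
    simp [psiMap]
  · rw [Fin.snoc_castSucc]
    fin_cases t <;> simp [psiMap, mul_comm]

theorem init_psiMap (i : Fin 3) (x : Fin 4 → K) :
    Fin.init (psiMap ℓ α β i (i + 1) (i + 1 + 1) x) = eval x (ℓ i) • x := by
  rw [psiMap_eq_snoc, Fin.init_snoc]

theorem onC5_psiMap (hl : ∀ i, (ℓ i).IsHomogeneous 1) (ha : ∀ i, (α i).IsHomogeneous 1)
    (hb : ∀ i, (β i).IsHomogeneous 1) (i : Fin 3) {x : Fin 4 → K} (hx : OnC4 ℓ α β x) :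
    OnC5 ℓ α β (psiMap ℓ α β i (i + 1) (i + 1 + 1) x) := by
  rw [onC5_iff, init_psiMap, psiMap_eq_snoc, Fin.snoc_last]
  refine ⟨hx.smul hl ha hb _, ?_⟩
  rw [eval_comp_smul_of_isHomogeneous hl, eval_comp_smul_of_isHomogeneous ha,
    eval_comp_smul_of_isHomogeneous hb, pow_one, map_smul, LinearMap.map_smul₂]
  ext s
  have hpar := mul_cross_apply_comm_of_dotProduct_eq_zero
    (u := eval x ∘ ℓ) (v := eval x ∘ α) (w := eval x ∘ β) hx.1 hx.2 i s
  simp only [Pi.smul_apply, smul_eq_mul, Function.comp_apply] at hpar ⊢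
  linear_combination -eval x (ℓ i) * hpar

theorem psiMap_init (i : Fin 3) {y : Fin 5 → K} (hy : OnC5 ℓ α β y) :
    psiMap ℓ α β i (i + 1) (i + 1 + 1) (Fin.init y) = eval (Fin.init y) (ℓ i) • y := by
  have hz := congrFun ((onC5_iff ℓ α β y).mp hy).2 i
  rw [psiMap_eq_snoc, ← hz]
  ext t
  refine Fin.lastCases ?_ (fun t => ?_) t
  · rw [Fin.snoc_last, Pi.smul_apply, Pi.smul_apply, smul_eq_mul, smul_eq_mul, mul_comm]
    rfl
  · rw [Fin.snoc_castSucc, Pi.smul_apply, Pi.smul_apply]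
    rfl

end

/-- The maps `ψ` and the projection are mutually inverse morphisms between
the quadric intersection `C₄ ⊂ P³` and the Pfaffian model `C₅ ⊂ P⁴`. -/
theorem quadric_intersection_pfaffian_correspondence {K : Type*} [Field K]
    (ℓ α β : Fin 3 → MvPolynomial (Fin 4) K)
    (hl : ∀ i, (ℓ i).IsHomogeneous 1) (ha : ∀ i, (α i).IsHomogeneous 1)
    (hb : ∀ i, (β i).IsHomogeneous 1)
    (i j k : Fin 3) (hcyc : j = i + 1 ∧ k = j + 1) :
    -- ψ maps C₄ (where ℓᵢ ≠ 0) into C₅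
    (∀ x : Fin 4 → K, OnC4 ℓ α β x → eval x (ℓ i) ≠ 0 →
      OnC5 ℓ α β (psiMap ℓ α β i j k x)) ∧
    -- the projection maps C₅ back into C₄
    (∀ y : Fin 5 → K, OnC5 ℓ α β y →
      OnC4 ℓ α β (fun t => y t.castSucc)) ∧
    -- proj ∘ ψ = ℓᵢ • id
    (∀ x : Fin 4 → K,
      (fun t : Fin 4 => psiMap ℓ α β i j k x t.castSucc) =
        eval x (ℓ i) • x) ∧
    -- ψ ∘ proj is multiplication by a nonzero scalar on C₅ where ℓᵢ ≠ 0
    (∀ y : Fin 5 → K, OnC5 ℓ α β y → y ≠ 0 →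
      eval (fun t : Fin 4 => y t.castSucc) (ℓ i) ≠ 0 →
      ∃ c : K, c ≠ 0 ∧ psiMap ℓ α β i j k (fun t => y t.castSucc) = c • y) := by
  obtain ⟨rfl, rfl⟩ := hcyc
  exact ⟨fun x hx _ => onC5_psiMap hl ha hb i hx, fun y hy => hy.onC4_init,
    init_psiMap i, fun y hy _ hi => ⟨_, hi, psiMap_init i hy⟩⟩
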